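/- arXiv:2111.02181 — 2 statements merged into one kernel-verified Lean document; each statement's English description precedes it below -/
import Mathlib

section
/- The composition g_0∘Z satisfies, in ℝ[[v]]: αβ·(1−v³)·(g_0∘Z) = v·(α + αv² + vβ)·(vα+β). -/
/-!
Substituting `z = Z(v)` is a ring homomorphism `ℝ[[z]] → ℝ[[v]]`, and `(α+βv)(β+αv)·Z = v`
clears all denominators. An interior recurrence then reads
`αβ·(G (N+1) - v·G N) = αβ·v·(G (N+2) - v·G (N+1))`: its characteristic roots are `v` and `1/v`,
and a sequence with `H N = v·H (N+1)` for all `N` is divisible by every power of `v`, hence zero.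
So `G₁ = v·G₀` and `F₂ = v·F₁`, and the four boundary equations become a linear system over
`ℝ[[v]]` in `F₀, F₁, f_Q∘Z, G₀`, solved by elimination.
-/

open PowerSeries Filter

noncomputable section

/-- Composition `h ∘ Z` of formal power series; this is the usual composition whenever
`Z` has zero constant term (then for each `n` only finitely many terms contribute). -/
def psComp (h Z : PowerSeries ℝ) : PowerSeries ℝ :=
  PowerSeries.mk fun n => ∑' k : ℕ, (PowerSeries.coeff k h) * (PowerSeries.coeff n (Z ^ k))

/-- The substitution series `Z = v · ((α+βv)(β+αv))⁻¹ ∈ ℝ[[v]]`; the inverse exists since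
the constant term `αβ` is nonzero, and `Z` has zero constant term. -/
def Zsub (α β : ℝ) : PowerSeries ℝ :=
  PowerSeries.X * (((PowerSeries.C α) + (PowerSeries.C β) * PowerSeries.X) *
    ((PowerSeries.C β) + (PowerSeries.C α) * PowerSeries.X))⁻¹

theorem psComp_eq_subst {Z : ℝ⟦X⟧} (hZ : constantCoeff Z = 0) (h : ℝ⟦X⟧) :
    psComp h Z = h.subst Z := by
  have hsubst := HasSubst.of_constantCoeff_zero' hZ
  ext n
  rw [psComp, coeff_mk, coeff_subst' hsubst,
    ← tsum_eq_finsum (L := .unconditional ℕ) (coeff_subst_finite' hsubst h n)]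
  rfl

theorem constantCoeff_Zsub (α β : ℝ) : constantCoeff (Zsub α β) = 0 := by
  rw [Zsub, map_mul, constantCoeff_X, zero_mul]

theorem mul_Zsub {α β : ℝ} (hα : α ≠ 0) (hβ : β ≠ 0) :
    (C α + C β * X) * (C β + C α * X) * Zsub α β = X := by
  have hW : constantCoeff ((C α + C β * X) * (C β + C α * X)) ≠ 0 := by simp [hα, hβ]
  rw [Zsub, mul_left_comm, PowerSeries.mul_inv_cancel _ hW, mul_one]

theorem PowerSeries.eq_zero_of_forall_eq_X_mul {R : Type*} [Semiring R] {H : ℕ → R⟦X⟧}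
    (h : ∀ N, H N = X * H (N + 1)) : H 0 = 0 := by
  have hpow : ∀ n, H 0 = X ^ n * H n := fun n => by
    induction n with
    | zero => rw [pow_zero, one_mul]
    | succ n ih => rw [ih, h n, pow_succ, mul_assoc]
  ext m
  rw [hpow (m + 1), coeff_X_pow_mul', if_neg (by omega), map_zero]

section Substituted

variable {R : Type*} [CommRing R] [IsDomain R] {a b : R} {Z : R⟦X⟧}

theorem eq_X_mul_of_recurrence (ha : a ≠ 0) (hb : b ≠ 0)
    (hZ : (C a + C b * X) * (C b + C a * X) * Z = X) {G : ℕ → R⟦X⟧}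
    (hG : ∀ N, G (N + 1) = C (a * b) * Z * G N + C (a * b) * Z * G (N + 2)
        + C (a ^ 2 + b ^ 2) * Z * G (N + 1)) :
    G 1 = X * G 0 := by
  have hab : C (a * b) ≠ 0 := (map_ne_zero_iff _ C_injective).mpr (mul_ne_zero ha hb)
  refine sub_eq_zero.mp (eq_zero_of_forall_eq_X_mul (H := fun N => G (N + 1) - X * G N)
    fun N => mul_left_cancel₀ hab ?_)
  simp only [map_mul, map_add, map_pow] at hG ⊢
  linear_combination (C a + C b * X) * (C b + C a * X) * hG N
    + (C a * C b * (G N + G (N + 2)) + (C a ^ 2 + C b ^ 2) * G (N + 1)) * hZ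

theorem g₀_closedForm_of_boundary (ha : a ≠ 0) (hb : b ≠ 0)
    (hZ : (C a + C b * X) * (C b + C a * X) * Z = X) {F₀ F₁ F₂ Q G₀ G₁ : R⟦X⟧}
    (hF₂ : F₂ = X * F₁) (hG₁ : G₁ = X * G₀)
    (h₁ : F₁ = C (a * b) * Z * F₀ + C (a * b) * Z * F₂ + C (a ^ 2 + b ^ 2) * Z * F₁
        + C (b ^ 2) * Z * Q)
    (h₀ : F₀ = 1 + C (a * b) * Z * F₁ + C (a ^ 2 + b ^ 2) * Z * F₀ + C (a * b) * Z * Q)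
    (hQ : Q = C (a * b) * Z * G₀ + C (a ^ 2) * Z * Q)
    (hG₀ : G₀ = C (a * b) * Z * F₀ + C (a * b) * Z * G₁ + C (a * b) * Z * Q
        + C (a ^ 2 + b ^ 2) * Z * G₀) :
    C (a * b) * (1 - X ^ 3) * G₀ = X * (C a + C a * X ^ 2 + X * C b) * (X * C a + C b) := by
  have hA : C a ≠ 0 := (map_ne_zero_iff _ C_injective).mpr ha
  have hB : C b ≠ 0 := (map_ne_zero_iff _ C_injective).mpr hb
  have hAB : C a + C b * X ≠ 0 := fun h => ha (by simpa using congrArg constantCoeff h)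
  simp only [map_mul, map_add, map_pow] at h₁ h₀ hQ hG₀ ⊢
  set A := C a
  set B := C b
  set W := (A + B * X) * (B + A * X)
  have e₁ : A * F₁ = A * X * F₀ + B * X * Q := mul_left_cancel₀ hB <| by
    linear_combination W * h₁ + A * B * X * hF₂
      + (A * B * (F₀ + F₂) + (A ^ 2 + B ^ 2) * F₁ + B ^ 2 * Q) * hZ
  have e₀ : A * B * F₀ = W + B * X * (A + B * X) * Q := mul_left_cancel₀ hA <| by
    linear_combination A * W * h₀ + A * B * X * e₁
      + A * (A * B * F₁ + (A ^ 2 + B ^ 2) * F₀ + A * B * Q) * hZ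
  have eQ : (A + B * X + A * X ^ 2) * Q = A * X * G₀ := mul_left_cancel₀ hB <| by
    linear_combination W * hQ + (A * B * G₀ + A ^ 2 * Q) * hZ
  have eG : G₀ = X * F₀ + X * Q := mul_left_cancel₀ (mul_ne_zero hA hB) <| by
    linear_combination W * hG₀ + A * B * X * hG₁
      + (A * B * (F₀ + G₁ + Q) + (A ^ 2 + B ^ 2) * G₀) * hZ
  refine mul_left_cancel₀ hAB ?_
  linear_combination A * B * (A + B * X + A * X ^ 2) * eG
    + X * (A + B * X + A * X ^ 2) * e₀ + B * X * (A + A * X + B * X ^ 2) * eQ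

end Substituted

theorem twoStep_g0_substituted_general
    (α β : ℝ) (hα0 : 0 < α) (hα1 : α < 1) (hβ : β = 1 - α)
    (f g : ℕ → PowerSeries ℝ) (fQ : PowerSeries ℝ)
    (hf : ∀ N : ℕ, f (N + 2) =
      C (α * β) * X * f (N + 1) + C (α * β) * X * f (N + 3)
        + C (α ^ 2 + β ^ 2) * X * f (N + 2))
    (hf1 : f 1 = C (α * β) * X * f 0 + C (α * β) * X * f 2
        + C (α ^ 2 + β ^ 2) * X * f 1 + C (β ^ 2) * X * fQ)
    (hf0 : f 0 = 1 + C (α * β) * X * f 1 + C (α ^ 2 + β ^ 2) * X * f 0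
        + C (α * β) * X * fQ)
    (hfQ : fQ = C (α * β) * X * g 0 + C (α ^ 2) * X * fQ)
    (hg : ∀ N : ℕ, g (N + 1) = C (α * β) * X * g N + C (α * β) * X * g (N + 2)
        + C (α ^ 2 + β ^ 2) * X * g (N + 1))
    (hg0 : g 0 = C (α * β) * X * f 0 + C (α * β) * X * g 1
        + C (α * β) * X * fQ + C (α ^ 2 + β ^ 2) * X * g 0) :
    C (α * β) * (1 - X ^ 3) * psComp (g 0) (Zsub α β) =
      X * (C α + C α * X ^ 2 + X * C β) * (X * C α + C β) := by
  have hα : α ≠ 0 := hα0.ne'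
  have hβ0 : β ≠ 0 := by rw [hβ]; linarith
  have hZ := mul_Zsub hα hβ0
  have hsubst := HasSubst.of_constantCoeff_zero' (constantCoeff_Zsub α β)
  rw [psComp_eq_subst (constantCoeff_Zsub α β), ← coe_substAlgHom hsubst]
  set φ := substAlgHom (R := ℝ) hsubst
  have hφ (c : ℝ) (p : ℝ⟦X⟧) : φ (C c * X * p) = C c * Zsub α β * φ p := by
    rw [map_mul, map_mul, substAlgHom_X, ← algebraMap_eq, AlgHom.commutes, algebraMap_eq]
  replace hf := fun N => congrArg φ (hf N)
  replace hg := fun N => congrArg φ (hg N)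
  replace hf1 := congrArg φ hf1
  replace hf0 := congrArg φ hf0
  replace hfQ := congrArg φ hfQ
  replace hg0 := congrArg φ hg0
  simp only [map_add φ, map_one, hφ] at hf hg hf1 hf0 hfQ hg0
  exact g₀_closedForm_of_boundary hα hβ0 hZ
    (eq_X_mul_of_recurrence hα hβ0 hZ (G := fun N => φ (f (N + 1))) hf)
    (eq_X_mul_of_recurrence hα hβ0 hZ (G := fun N => φ (g N)) hg) hf1 hf0 hfQ hg0

/-- After the substitution `z = v/((α+βv)(β+αv))`, the series `g₀` becomes rational:
`αβ(1-v³)·(g₀∘Z) = v(α+αv²+vβ)(vα+β)`. -/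
theorem twoStep_g0_substituted
    (α β : ℝ) (hα0 : 0 < α) (hα1 : α < 1) (hβ : β = 1 - α)
    (f g : ℕ → PowerSeries ℝ) (fQ : PowerSeries ℝ)
    (hf : ∀ N : ℕ, f (N + 2) =
      C (α * β) * X * f (N + 1) + C (α * β) * X * f (N + 3)
        + C (α ^ 2 + β ^ 2) * X * f (N + 2))
    (hf1 : f 1 = C (α * β) * X * f 0 + C (α * β) * X * f 2
        + C (α ^ 2 + β ^ 2) * X * f 1 + C (β ^ 2) * X * fQ)
    (hf0 : f 0 = 1 + C (α * β) * X * f 1 + C (α ^ 2 + β ^ 2) * X * f 0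
        + C (α * β) * X * fQ)
    (hfQ : fQ = C (α * β) * X * g 0 + C (α ^ 2) * X * fQ)
    (hg : ∀ N : ℕ, g (N + 1) = C (α * β) * X * g N + C (α * β) * X * g (N + 2)
        + C (α ^ 2 + β ^ 2) * X * g (N + 1))
    (hg0 : g 0 = C (α * β) * X * f 0 + C (α * β) * X * g 1
        + C (α * β) * X * fQ + C (α ^ 2 + β ^ 2) * X * g 0)
    (hsupp : ∀ m N : ℕ, m < N → coeff m (f N) = 0 ∧ coeff m (g N) = 0) :
    C (α * β) * (1 - X ^ 3) * psComp (g 0) (Zsub α β) =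
      X * (C α + C α * X ^ 2 + X * C β) * (X * C α + C β) :=
  twoStep_g0_substituted_general α β hα0 hα1 hβ f g fQ hf hf1 hf0 hfQ hg hg0
end
end

section
/- In the symmetric case α = 1/2 (so β = 1/2), the coefficients of the expected-end generating function satisfy lim_{n→∞} ([z^n]E)/√n = 2/√π, where [z^n]E denotes the n-th coefficient of E. -/
/-!
At `α = β = 1/2` one step of the system moves a walker on the half-line by `-1, 0, +1` with
probabilities `1/4, 1/2, 1/4`, i.e. it is two steps of a simple random walk. Accordingly the
coefficients are binomial: `[z^m] g_N = [z^m] f_{N+1} = C(2m, m+N+1)/4^m` and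
`[z^m] (f_0 + f_Q) = C(2m, m)/4^m`, which is checked by induction on `m` with Pascal's rule applied
twice. Summing against the weights gives `[z^n] E = (2n + 1/2) C(2n, n)/4^n - 1/2`, using the total
mass `Σ_k C(2n, k) = 4^n` and the mean absolute deviation `Σ_k |k - n| C(2n, k) = n C(2n, n)` of the
binomial distribution. Finally Stirling's formula gives `C(2n, n)/4^n ~ 1/√(πn)`.
-/

open PowerSeries Filter

noncomputable section

/-- The expected-end generating function `E = Σ_k 2k·f_k + Σ_k (2k+1)·g_k`; for each `n`
the support condition makes the series of `n`-th coefficients a finite sum. -/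
def expectedEnd (f g : ℕ → PowerSeries ℝ) : PowerSeries ℝ :=
  PowerSeries.mk fun n =>
    ∑' k : ℕ, ((2 * k : ℝ) * PowerSeries.coeff n (f k)
      + (2 * (k : ℝ) + 1) * PowerSeries.coeff n (g k))

open Finset Topology
open scoped Real

theorem Nat.choose_add_two_add_two (n k : ℕ) :
    (n + 2).choose (k + 2) = n.choose k + 2 * n.choose (k + 1) + n.choose (k + 2) := by
  simp only [Nat.choose_succ_succ]
  ring

theorem Nat.centralBinom_succ_eq_two_mul_choose (m : ℕ) :
    (m + 1).centralBinom = 2 * (2 * m + 1).choose (m + 1) := by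
  rw [Nat.centralBinom_eq_two_mul_choose, show 2 * (m + 1) = 2 * m + 1 + 1 by ring,
    Nat.choose_succ_succ, Nat.choose_symm_half]
  ring

theorem Nat.centralBinom_succ_eq_two_mul_centralBinom_add (m : ℕ) :
    (m + 1).centralBinom = 2 * m.centralBinom + 2 * (2 * m).choose (m + 1) := by
  rw [Nat.centralBinom_succ_eq_two_mul_choose, Nat.choose_succ_succ,
    Nat.centralBinom_eq_two_mul_choose]
  ring

theorem Nat.centralBinom_add_two_mul_sum_choose (n : ℕ) :
    n.centralBinom + 2 * ∑ i ∈ range n, (2 * n).choose (n + i + 1) = 4 ^ n := by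
  have hlower : ∑ i ∈ range n, (2 * n).choose i = ∑ i ∈ range n, (2 * n).choose (n + i + 1) := by
    rw [← sum_range_reflect]
    refine sum_congr rfl fun i hi => ?_
    rw [← Nat.choose_symm (by omega)]
    congr 1
    have := mem_range.mp hi
    omega
  have htotal := Nat.sum_range_choose (2 * n)
  rw [show 2 * n + 1 = n + 1 + n by ring, sum_range_add, sum_range_succ, hlower] at htotal
  simp only [show ∀ i, n + 1 + i = n + i + 1 by omega] at htotal
  rw [Nat.centralBinom_eq_two_mul_choose, show 4 ^ n = 2 ^ (2 * n) by rw [pow_mul]; norm_num]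
  omega

theorem Nat.succ_mul_choose_telescope (m i : ℕ) :
    (i + 1) * (2 * m + 2).choose (m + i + 2) + (m + 1) * (2 * m + 1).choose (m + i + 2) =
      (m + 1) * (2 * m + 1).choose (m + i + 1) := by
  have hpascal := Nat.choose_succ_succ (2 * m + 1) (m + i + 1)
  have habsorb := Nat.add_one_mul_choose_eq (2 * m + 1) (m + i + 1)
  zify at *
  linear_combination (-(m : ℤ) - 1) * hpascal - habsorb

/-- Half the mean absolute deviation: `Σ_{k > n} (k - n) C(2n, k) = n C(2n, n) / 2`. -/
theorem Nat.two_mul_sum_succ_mul_choose (n : ℕ) :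
    2 * ∑ i ∈ range n, (i + 1) * (2 * n).choose (n + i + 1) = n * n.centralBinom := by
  rcases n with _ | m
  · simp
  have hsum := sum_congr rfl fun i (_ : i ∈ range (m + 1)) => Nat.succ_mul_choose_telescope m i
  rw [sum_add_distrib] at hsum
  have hshift := sum_range_succ' (fun i => (m + 1) * (2 * m + 1).choose (m + i + 1)) (m + 1)
  rw [sum_range_succ, Nat.choose_eq_zero_of_lt (by omega : 2 * m + 1 < m + (m + 1) + 1)] at hshift
  simp only [show ∀ i, m + (i + 1) + 1 = m + i + 2 by omega, add_zero] at hshift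
  rw [Nat.centralBinom_succ_eq_two_mul_choose, show 2 * (m + 1) = 2 * m + 2 by ring]
  simp only [show ∀ i, m + 1 + i + 1 = m + i + 2 by omega]
  linarith

theorem Nat.sqrt_mul_centralBinom_div_four_pow (n : ℕ) :
    √n * n.centralBinom / 4 ^ n = Stirling.stirlingSeq (2 * n) / Stirling.stirlingSeq n ^ 2 := by
  rcases Nat.eq_zero_or_pos n with rfl | hn
  · simp [Stirling.stirlingSeq]
  have hfac : ((2 * n).factorial : ℝ) = n.centralBinom * n.factorial ^ 2 := by
    rw [Nat.centralBinom_eq_two_mul_choose,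
      ← Nat.choose_mul_factorial_mul_factorial (show n ≤ 2 * n by omega), show 2 * n - n = n by omega]
    push_cast
    ring
  have hsqrt : √(2 * ((2 * n : ℕ) : ℝ)) = 2 * √n := by
    rw [show (2 * ((2 * n : ℕ) : ℝ)) = 2 ^ 2 * n by push_cast; ring, Real.sqrt_mul (by norm_num),
      Real.sqrt_sq (by norm_num)]
  have hpow : (((2 * n : ℕ) : ℝ) / Real.exp 1) ^ (2 * n) = 4 ^ n * ((n : ℝ) / Real.exp 1) ^ (2 * n) := by
    rw [show ((2 * n : ℕ) : ℝ) / Real.exp 1 = 2 * (n / Real.exp 1) by push_cast; ring, mul_pow,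
      pow_mul (2 : ℝ) 2 n]
    norm_num
  have hn' : (0 : ℝ) < n := by exact_mod_cast hn
  simp only [Stirling.stirlingSeq, div_pow, mul_pow, hfac, hsqrt, hpow,
    Real.sq_sqrt (by positivity : (0 : ℝ) ≤ 2 * n), ← pow_mul]
  field_simp
  rw [Real.sq_sqrt hn'.le]
  ring

theorem Nat.tendsto_sqrt_mul_centralBinom_div_four_pow :
    Tendsto (fun n : ℕ => √n * n.centralBinom / 4 ^ n) atTop (𝓝 (1 / √π)) := by
  have hπ := Real.pi_pos
  have hdouble : Tendsto (fun n : ℕ => Stirling.stirlingSeq (2 * n)) atTop (𝓝 √π) :=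
    Stirling.tendsto_stirlingSeq_sqrt_pi.comp (tendsto_id.const_mul_atTop' (two_pos : (0 : ℕ) < 2))
  have hsq : Tendsto (fun n : ℕ => Stirling.stirlingSeq n ^ 2) atTop (𝓝 π) := by
    simpa [Real.sq_sqrt hπ.le] using Stirling.tendsto_stirlingSeq_sqrt_pi.pow 2
  convert hdouble.div hsq hπ.ne' using 1
  · exact funext Nat.sqrt_mul_centralBinom_div_four_pow
  · congr 1
    rw [div_eq_div_iff (Real.sqrt_ne_zero'.mpr hπ) hπ.ne', one_mul, Real.mul_self_sqrt hπ.le]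

namespace PowerSeries

variable {R : Type*} [Semiring R]

@[simp]
theorem coeff_succ_C_mul_X_mul (a : R) (φ : R⟦X⟧) (m : ℕ) :
    coeff (m + 1) (C a * X * φ) = a * coeff m φ := by
  rw [mul_assoc, coeff_C_mul, coeff_succ_X_mul]

@[simp]
theorem coeff_zero_C_mul_X_mul (a : R) (φ : R⟦X⟧) : coeff 0 (C a * X * φ) = 0 := by
  rw [mul_assoc, coeff_C_mul, coeff_zero_X_mul, mul_zero]

end PowerSeries

def tailCoeff (m N : ℕ) : ℝ := ((2 * m).choose (m + N + 1) : ℝ) / 4 ^ m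

def centralCoeff (m : ℕ) : ℝ := (m.centralBinom : ℝ) / 4 ^ m

theorem tailCoeff_zero (N : ℕ) : tailCoeff 0 N = 0 := by
  simp [tailCoeff]

theorem tailCoeff_self (n : ℕ) : tailCoeff n n = 0 := by
  simp [tailCoeff, Nat.choose_eq_zero_of_lt (show 2 * n < n + n + 1 by omega)]

theorem centralCoeff_zero : centralCoeff 0 = 1 := by
  simp [centralCoeff]

theorem centralCoeff_succ (m : ℕ) :
    centralCoeff (m + 1) = 1 / 2 * tailCoeff m 0 + 1 / 2 * centralCoeff m := by
  simp only [centralCoeff, tailCoeff, Nat.centralBinom_succ_eq_two_mul_centralBinom_add, add_zero, pow_succ]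
  push_cast
  field_simp
  ring

theorem tailCoeff_succ_zero (m : ℕ) :
    tailCoeff (m + 1) 0 = 1 / 4 * centralCoeff m + 1 / 2 * tailCoeff m 0 + 1 / 4 * tailCoeff m 1 := by
  simp only [centralCoeff, tailCoeff, Nat.centralBinom_eq_two_mul_choose, pow_succ,
    show 2 * (m + 1) = 2 * m + 2 by ring, Nat.choose_add_two_add_two]
  push_cast
  field_simp
  ring

theorem tailCoeff_succ_succ (m N : ℕ) :
    tailCoeff (m + 1) (N + 1) =
      1 / 4 * tailCoeff m N + 1 / 2 * tailCoeff m (N + 1) + 1 / 4 * tailCoeff m (N + 2) := by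
  simp only [tailCoeff, pow_succ, show 2 * (m + 1) = 2 * m + 2 by ring,
    show m + 1 + (N + 1) + 1 = m + N + 1 + 2 by ring, Nat.choose_add_two_add_two,
    show m + (N + 1) + 1 = m + N + 1 + 1 by ring, show m + (N + 2) + 1 = m + N + 1 + 2 by ring]
  push_cast
  field_simp
  ring

theorem sum_mul_tailCoeff (n : ℕ) :
    ∑ i ∈ range n, (4 * (i : ℝ) + 3) * tailCoeff n i = (2 * n + 1 / 2) * centralCoeff n - 1 / 2 := by
  have hmass : (n.centralBinom : ℝ) + 2 * ∑ i ∈ range n, ((2 * n).choose (n + i + 1) : ℝ) = 4 ^ n := by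
    exact_mod_cast Nat.centralBinom_add_two_mul_sum_choose n
  have hmoment : 2 * ∑ i ∈ range n, ((i : ℝ) + 1) * (2 * n).choose (n + i + 1) =
      n * n.centralBinom := by
    exact_mod_cast Nat.two_mul_sum_succ_mul_choose n
  have hsplit : ∑ i ∈ range n, (4 * (i : ℝ) + 3) * tailCoeff n i =
      (4 * ∑ i ∈ range n, ((i : ℝ) + 1) * (2 * n).choose (n + i + 1) -
        ∑ i ∈ range n, ((2 * n).choose (n + i + 1) : ℝ)) / 4 ^ n := by
    rw [mul_sum, ← sum_sub_distrib, sum_div]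
    exact sum_congr rfl fun i _ => by rw [tailCoeff]; ring
  rw [hsplit, centralCoeff]
  field_simp
  linear_combination 4 * hmoment - hmass

structure IsKBHSolution (α : ℝ) (f g : ℕ → ℝ⟦X⟧) (fQ : ℝ⟦X⟧) : Prop where
  f_add_two : ∀ N : ℕ, f (N + 2) =
    C (α * (1 - α)) * X * f (N + 1) + C (α * (1 - α)) * X * f (N + 3)
      + C (α ^ 2 + (1 - α) ^ 2) * X * f (N + 2)
  f_one : f 1 = C (α * (1 - α)) * X * f 0 + C (α * (1 - α)) * X * f 2
      + C (α ^ 2 + (1 - α) ^ 2) * X * f 1 + C ((1 - α) ^ 2) * X * fQ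
  f_zero : f 0 = 1 + C (α * (1 - α)) * X * f 1 + C (α ^ 2 + (1 - α) ^ 2) * X * f 0
      + C (α * (1 - α)) * X * fQ
  fQ_eq : fQ = C (α * (1 - α)) * X * g 0 + C (α ^ 2) * X * fQ
  g_add_one : ∀ N : ℕ, g (N + 1) = C (α * (1 - α)) * X * g N + C (α * (1 - α)) * X * g (N + 2)
      + C (α ^ 2 + (1 - α) ^ 2) * X * g (N + 1)
  g_zero : g 0 = C (α * (1 - α)) * X * f 0 + C (α * (1 - α)) * X * g 1
      + C (α * (1 - α)) * X * fQ + C (α ^ 2 + (1 - α) ^ 2) * X * g 0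
  coeff_eq_zero_of_lt : ∀ m N : ℕ, m < N → coeff m (f N) = 0 ∧ coeff m (g N) = 0

namespace IsKBHSolution

variable {f g : ℕ → ℝ⟦X⟧} {fQ : ℝ⟦X⟧} {m : ℕ}

theorem coeff_succ_g (h : IsKBHSolution (1 / 2) f g fQ)
    (hc : coeff m (f 0) + coeff m fQ = centralCoeff m)
    (hg : ∀ N, coeff m (g N) = tailCoeff m N) (N : ℕ) :
    coeff (m + 1) (g N) = tailCoeff (m + 1) N := by
  rcases N with _ | N
  · rw [h.g_zero]
    simp only [LinearMap.map_add, coeff_succ_C_mul_X_mul, hg, tailCoeff_succ_zero]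
    linear_combination (1 / 4 : ℝ) * hc
  · rw [h.g_add_one]
    simp only [LinearMap.map_add, coeff_succ_C_mul_X_mul, hg, tailCoeff_succ_succ]
    ring

theorem coeff_succ_f_succ (h : IsKBHSolution (1 / 2) f g fQ)
    (hc : coeff m (f 0) + coeff m fQ = centralCoeff m)
    (hf : ∀ N, coeff m (f (N + 1)) = tailCoeff m N) (N : ℕ) :
    coeff (m + 1) (f (N + 1)) = tailCoeff (m + 1) N := by
  rcases N with _ | N
  · rw [h.f_one]
    simp only [LinearMap.map_add, coeff_succ_C_mul_X_mul, hf, tailCoeff_succ_zero]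
    linear_combination (1 / 4 : ℝ) * hc
  · rw [h.f_add_two]
    simp only [LinearMap.map_add, coeff_succ_C_mul_X_mul, hf, tailCoeff_succ_succ]
    ring

theorem coeff_succ_f_zero_add_coeff_succ_fQ (h : IsKBHSolution (1 / 2) f g fQ)
    (hc : coeff m (f 0) + coeff m fQ = centralCoeff m)
    (hg : coeff m (g 0) = tailCoeff m 0) (hf : coeff m (f 1) = tailCoeff m 0) :
    coeff (m + 1) (f 0) + coeff (m + 1) fQ = centralCoeff (m + 1) := by
  rw [h.fQ_eq, h.f_zero]
  simp only [LinearMap.map_add, coeff_succ_C_mul_X_mul, coeff_one, if_neg m.succ_ne_zero, hg, hf,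
    centralCoeff_succ]
  linear_combination (1 / 2 : ℝ) * hc

theorem coeff_eq_centralCoeff_tailCoeff (h : IsKBHSolution (1 / 2) f g fQ) (m : ℕ) :
    coeff m (f 0) + coeff m fQ = centralCoeff m ∧ (∀ N, coeff m (g N) = tailCoeff m N) ∧
      ∀ N, coeff m (f (N + 1)) = tailCoeff m N := by
  induction m with
  | zero =>
    refine ⟨?_, fun N => ?_, fun N => ?_⟩
    · rw [h.fQ_eq, h.f_zero]
      simp [centralCoeff_zero]
    · rcases N with _ | N
      · rw [h.g_zero]
        simp [tailCoeff_zero]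
      · rw [(h.coeff_eq_zero_of_lt 0 (N + 1) N.succ_pos).2, tailCoeff_zero]
    · rw [(h.coeff_eq_zero_of_lt 0 (N + 1) N.succ_pos).1, tailCoeff_zero]
  | succ m ih =>
    obtain ⟨hc, hg, hf⟩ := ih
    exact ⟨h.coeff_succ_f_zero_add_coeff_succ_fQ hc (hg 0) (hf 0), h.coeff_succ_g hc hg,
      h.coeff_succ_f_succ hc hf⟩

theorem coeff_expectedEnd (h : IsKBHSolution (1 / 2) f g fQ) (n : ℕ) :
    coeff n (expectedEnd f g) = (2 * n + 1 / 2) * centralCoeff n - 1 / 2 := by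
  obtain ⟨-, hg, hf⟩ := h.coeff_eq_centralCoeff_tailCoeff n
  rw [expectedEnd, coeff_mk, tsum_eq_sum (s := range (n + 1)) fun k hk => ?vanish,
    sum_add_distrib, sum_range_succ', sum_range_succ, hg n, tailCoeff_self, ← sum_mul_tailCoeff]
  case vanish =>
    obtain ⟨hfk, hgk⟩ := h.coeff_eq_zero_of_lt n k (by simpa using hk)
    simp [hfk, hgk]
  simp only [hf, hg, Nat.cast_zero, Nat.cast_succ, mul_zero, zero_mul, add_zero,
    ← sum_add_distrib]
  exact sum_congr rfl fun i _ => by ring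

end IsKBHSolution

theorem expectedEnd_coeff_asymptotic_symmetric_general
    (α β : ℝ) (hβ : β = 1 - α)
    (f g : ℕ → PowerSeries ℝ) (fQ : PowerSeries ℝ)
    (hf : ∀ N : ℕ, f (N + 2) =
      C (α * β) * X * f (N + 1) + C (α * β) * X * f (N + 3)
        + C (α ^ 2 + β ^ 2) * X * f (N + 2))
    (hf1 : f 1 = C (α * β) * X * f 0 + C (α * β) * X * f 2
        + C (α ^ 2 + β ^ 2) * X * f 1 + C (β ^ 2) * X * fQ)
    (hf0 : f 0 = 1 + C (α * β) * X * f 1 + C (α ^ 2 + β ^ 2) * X * f 0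
        + C (α * β) * X * fQ)
    (hfQ : fQ = C (α * β) * X * g 0 + C (α ^ 2) * X * fQ)
    (hg : ∀ N : ℕ, g (N + 1) = C (α * β) * X * g N + C (α * β) * X * g (N + 2)
        + C (α ^ 2 + β ^ 2) * X * g (N + 1))
    (hg0 : g 0 = C (α * β) * X * f 0 + C (α * β) * X * g 1
        + C (α * β) * X * fQ + C (α ^ 2 + β ^ 2) * X * g 0)
    (hsupp : ∀ m N : ℕ, m < N → coeff m (f N) = 0 ∧ coeff m (g N) = 0) (hhalf : α = 1 / 2) :
    Tendsto (fun n : ℕ => coeff n (expectedEnd f g) / Real.sqrt n) atTop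
      (nhds (2 / Real.sqrt Real.pi)) := by
  subst hβ
  have hsol : IsKBHSolution α f g fQ := ⟨hf, hf1, hf0, hfQ, hg, hg0, hsupp⟩
  subst hhalf
  have hinv_sqrt : Tendsto (fun n : ℕ => (√n)⁻¹) atTop (𝓝 0) :=
    tendsto_inv_atTop_zero.comp (Real.tendsto_sqrt_atTop.comp tendsto_natCast_atTop_atTop)
  have hlim : Tendsto (fun n : ℕ => (2 + (n : ℝ)⁻¹ / 2) * (√n * n.centralBinom / 4 ^ n) - (√n)⁻¹ / 2)
      atTop (𝓝 (2 / √π)) := by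
    convert ((tendsto_const_nhds.add (tendsto_inv_atTop_nhds_zero_nat.div_const 2)).mul
      Nat.tendsto_sqrt_mul_centralBinom_div_four_pow).sub (hinv_sqrt.div_const 2) using 2
    ring
  refine hlim.congr' ?_
  filter_upwards [eventually_ne_atTop 0] with n hn
  have hsqrt : (√n) ^ 2 = n := Real.sq_sqrt n.cast_nonneg
  rw [hsol.coeff_expectedEnd, centralCoeff]
  field_simp
  rw [hsqrt]
  ring

/-- In the symmetric case `α = 1/2`, the coefficients of the expected-end generating
function satisfy `[z^n]E ∼ 2√(n/π)`. -/
theorem expectedEnd_coeff_asymptotic_symmetric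
    (α β : ℝ) (hα0 : 0 < α) (hα1 : α < 1) (hβ : β = 1 - α)
    (f g : ℕ → PowerSeries ℝ) (fQ : PowerSeries ℝ)
    (hf : ∀ N : ℕ, f (N + 2) =
      C (α * β) * X * f (N + 1) + C (α * β) * X * f (N + 3)
        + C (α ^ 2 + β ^ 2) * X * f (N + 2))
    (hf1 : f 1 = C (α * β) * X * f 0 + C (α * β) * X * f 2
        + C (α ^ 2 + β ^ 2) * X * f 1 + C (β ^ 2) * X * fQ)
    (hf0 : f 0 = 1 + C (α * β) * X * f 1 + C (α ^ 2 + β ^ 2) * X * f 0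
        + C (α * β) * X * fQ)
    (hfQ : fQ = C (α * β) * X * g 0 + C (α ^ 2) * X * fQ)
    (hg : ∀ N : ℕ, g (N + 1) = C (α * β) * X * g N + C (α * β) * X * g (N + 2)
        + C (α ^ 2 + β ^ 2) * X * g (N + 1))
    (hg0 : g 0 = C (α * β) * X * f 0 + C (α * β) * X * g 1
        + C (α * β) * X * fQ + C (α ^ 2 + β ^ 2) * X * g 0)
    (hsupp : ∀ m N : ℕ, m < N → coeff m (f N) = 0 ∧ coeff m (g N) = 0) (hhalf : α = 1 / 2) :
    Tendsto (fun n : ℕ => coeff n (expectedEnd f g) / Real.sqrt n) atTop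
      (nhds (2 / Real.sqrt Real.pi)) :=
  expectedEnd_coeff_asymptotic_symmetric_general α β hβ f g fQ hf hf1 hf0 hfQ hg hg0 hsupp hhalf
end
end
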